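/- The functions f_E, f_A, f_I are well defined (the improper integrals converge), differentiable on ℝ≥0, and satisfy for all θ ≥ 0: f_E'(θ) = (k(θ)+μ)·f_E(θ) − f_A(0)·k(θ)q(θ) − f_I(0)·k(θ)(1−q(θ)); f_A'(θ) = (γ_A(θ)ξ(θ)+χ(θ)(1−ξ(θ))+μ)·f_A(θ) − f_I(0)·χ(θ)(1−ξ(θ)) − M·β_A(θ); f_I'(θ) = (γ_I(θ)+μ)·f_I(θ) − M·β_I(θ). -/

import Mathlib

open MeasureTheory Filter

noncomputable section

/-- Survival kernel of the exposed class: `π_E(θ) = exp(−∫₀^θ (k(τ)+μ) dτ)`. -/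
def piE (μ : ℝ) (k : ℝ → ℝ) (θ : ℝ) : ℝ :=
  Real.exp (-(∫ τ in (0:ℝ)..θ, (k τ + μ)))

/-- Survival kernel of the asymptomatic class:
`π_A(θ) = exp(−∫₀^θ (γ_A ξ + χ(1−ξ) + μ) dτ)`. -/
def piA (μ : ℝ) (γA ξ χ : ℝ → ℝ) (θ : ℝ) : ℝ :=
  Real.exp (-(∫ τ in (0:ℝ)..θ, (γA τ * ξ τ + χ τ * (1 - ξ τ) + μ)))

/-- Survival kernel of the symptomatic class: `π_I(θ) = exp(−∫₀^θ (γ_I(τ)+μ) dτ)`. -/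
def piI (μ : ℝ) (γI : ℝ → ℝ) (θ : ℝ) : ℝ :=
  Real.exp (-(∫ τ in (0:ℝ)..θ, (γI τ + μ)))

/-- An essentially bounded measurable nonnegative coefficient on `ℝ≥0`
(element of `L∞(ℝ≥0; ℝ≥0)`). -/
def CoeffBM (f : ℝ → ℝ) : Prop :=
  Measurable f ∧ (∃ C : ℝ, ∀ θ, 0 ≤ θ → f θ ≤ C) ∧ (∀ θ, 0 ≤ θ → 0 ≤ f θ)

/-- A measurable coefficient with values in `[0,1]` on `ℝ≥0`
(element of `L∞(ℝ≥0; [0,1])`). -/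
def FracBM (f : ℝ → ℝ) : Prop :=
  Measurable f ∧ ∀ θ, 0 ≤ θ → f θ ∈ Set.Icc (0:ℝ) 1

/-- A bounded continuous nonnegative coefficient on `ℝ≥0`. -/
def CoeffBC (f : ℝ → ℝ) : Prop :=
  Continuous f ∧ (∃ C : ℝ, ∀ θ, 0 ≤ θ → f θ ≤ C) ∧ (∀ θ, 0 ≤ θ → 0 ≤ f θ)

/-- A continuous coefficient with values in `[0,1]` on `ℝ≥0`. -/
def FracBC (f : ℝ → ℝ) : Prop :=
  Continuous f ∧ ∀ θ, 0 ≤ θ → f θ ∈ Set.Icc (0:ℝ) 1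

/-- Variation-of-constants expression `S[b]` for the susceptible compartment. -/
def Ssol (μ N0 p S0 : ℝ) (b : ℝ → ℝ) (t : ℝ) : ℝ :=
  S0 * Real.exp (-(∫ s in (0:ℝ)..t, (p + b s + μ))) +
    μ * N0 * ∫ s in (0:ℝ)..t, Real.exp (-(∫ τ in s..t, (p + b τ + μ)))

/-- Variation-of-constants expression `V[b]` for the vaccinated compartment. -/
def Vsol (μ N0 p ζ ε S0 V0 : ℝ) (b : ℝ → ℝ) (t : ℝ) : ℝ :=
  V0 * Real.exp (-(∫ s in (0:ℝ)..t, (ζ * ε + b s * (1 - ε) + μ))) +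
    p * ∫ s in (0:ℝ)..t, Ssol μ N0 p S0 b s *
      Real.exp (-(∫ τ in s..t, (ζ * ε + b τ * (1 - ε) + μ)))

/-- The boundary value `ε̃(t) = β(t)·(S(t) + (1−ε)V(t))`. -/
def epsTilde (μ N0 p ζ ε S0 V0 : ℝ) (β : ℝ → ℝ) (t : ℝ) : ℝ :=
  β t * (Ssol μ N0 p S0 β t + (1 - ε) * Vsol μ N0 p ζ ε S0 V0 β t)

/-- Age density along characteristics: initial datum `f0` transported below the
diagonal, boundary datum `bdry` transported above the diagonal, with survival
kernel `π`. -/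
def dens (π f0 bdry : ℝ → ℝ) (t θ : ℝ) : ℝ :=
  if t < θ then f0 (θ - t) * π θ / π (θ - t) else bdry (t - θ) * π θ

/-- The Volterra integral system for the triple `(β, α, ι)` of boundary values. -/
def VolterraSystem (μ N0 p ζ ε S0 V0 : ℝ)
    (βA βI k χ γA γI q ξ e0 a0 i0 β α ι : ℝ → ℝ) : Prop :=
  ContinuousOn β (Set.Ici 0) ∧ ContinuousOn α (Set.Ici 0) ∧ ContinuousOn ι (Set.Ici 0) ∧
    ∀ t, 0 ≤ t →
      β t = (∫ s in (0:ℝ)..t,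
          (βA (t - s) * α s * piA μ γA ξ χ (t - s) +
            βI (t - s) * ι s * piI μ γI (t - s))) +
        (∫ s in Set.Ioi (0:ℝ),
          (βA (t + s) * a0 s * piA μ γA ξ χ (t + s) / piA μ γA ξ χ s +
            βI (t + s) * i0 s * piI μ γI (t + s) / piI μ γI s)) ∧
      α t = (∫ s in (0:ℝ)..t,
          k (t - s) * q (t - s) * β s *
            (Ssol μ N0 p S0 β s + (1 - ε) * Vsol μ N0 p ζ ε S0 V0 β s) * piE μ k (t - s)) +
        (∫ s in Set.Ioi (0:ℝ),
          k (t + s) * q (t + s) * e0 s * piE μ k (t + s) / piE μ k s) ∧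
      ι t = (∫ s in (0:ℝ)..t,
          (k (t - s) * (1 - q (t - s)) * β s *
              (Ssol μ N0 p S0 β s + (1 - ε) * Vsol μ N0 p ζ ε S0 V0 β s) * piE μ k (t - s) +
            χ (t - s) * (1 - ξ (t - s)) * α s * piA μ γA ξ χ (t - s))) +
        (∫ s in Set.Ioi (0:ℝ),
          (k (t + s) * (1 - q (t + s)) * e0 s * piE μ k (t + s) / piE μ k s +
            χ (t + s) * (1 - ξ (t + s)) * a0 s * piA μ γA ξ χ (t + s) / piA μ γA ξ χ s))

/-- `R_A = (∫₀^∞ k q π_E)·(∫₀^∞ β_A π_A)`. -/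
def RAdef (μ : ℝ) (βA k q γA ξ χ : ℝ → ℝ) : ℝ :=
  (∫ s in Set.Ioi (0:ℝ), k s * q s * piE μ k s) *
    (∫ s in Set.Ioi (0:ℝ), βA s * piA μ γA ξ χ s)

/-- `R_I = (∫₀^∞ k(1−q)π_E + (∫₀^∞ k q π_E)·(∫₀^∞ χ(1−ξ)π_A))·(∫₀^∞ β_I π_I)`. -/
def RIdef (μ : ℝ) (βI k q χ ξ γA γI : ℝ → ℝ) : ℝ :=
  ((∫ s in Set.Ioi (0:ℝ), k s * (1 - q s) * piE μ k s) +
      (∫ s in Set.Ioi (0:ℝ), k s * q s * piE μ k s) *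
        (∫ s in Set.Ioi (0:ℝ), χ s * (1 - ξ s) * piA μ γA ξ χ s)) *
    (∫ s in Set.Ioi (0:ℝ), βI s * piI μ γI s)

/-- The basic reproduction number `R₀`. -/
def R0def (μ N0 p ζ ε : ℝ) (βA βI k χ γA γI q ξ : ℝ → ℝ) : ℝ :=
  (μ * N0 / (p + μ)) * (1 + p * (1 - ε) / (ζ * ε + μ)) *
    (RAdef μ βA k q γA ξ χ + RIdef μ βI k q χ ξ γA γI)

/-- A steady state of the age-structured SVEAIR problem. -/
def SteadyState (μ N0 p ζ ε : ℝ) (βA βI k χ γA γI q ξ : ℝ → ℝ)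
    (Sst Vst βst εst αst ιst : ℝ) (est ast ist : ℝ → ℝ) : Prop :=
  0 ≤ Sst ∧ 0 ≤ Vst ∧ 0 ≤ βst ∧ 0 ≤ εst ∧ 0 ≤ αst ∧ 0 ≤ ιst ∧
    (∀ θ, 0 ≤ θ → 0 ≤ est θ) ∧ (∀ θ, 0 ≤ θ → 0 ≤ ast θ) ∧ (∀ θ, 0 ≤ θ → 0 ≤ ist θ) ∧
    Sst = μ * N0 / (p + βst + μ) ∧
    Vst = p * Sst / (ζ * ε + βst * (1 - ε) + μ) ∧
    (∀ θ, 0 ≤ θ → est θ = εst * piE μ k θ) ∧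
    (∀ θ, 0 ≤ θ → ast θ = αst * piA μ γA ξ χ θ) ∧
    (∀ θ, 0 ≤ θ → ist θ = ιst * piI μ γI θ) ∧
    εst = βst * (Sst + (1 - ε) * Vst) ∧
    αst = (∫ θ in Set.Ioi (0:ℝ), k θ * q θ * est θ) ∧
    ιst = (∫ θ in Set.Ioi (0:ℝ), (k θ * (1 - q θ) * est θ + χ θ * (1 - ξ θ) * ast θ)) ∧
    βst = (∫ θ in Set.Ioi (0:ℝ), (βA θ * ast θ + βI θ * ist θ))

/-- The scalar function `g` whose fixed points characterize steady states. -/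
def gfun (μ N0 p ζ ε RA RI β : ℝ) : ℝ :=
  (μ * N0 / (p + β + μ)) * (1 + p * (1 - ε) / (ζ * ε + β * (1 - ε) + μ)) * (RA + RI)

/-- The Lyapunov weight `f_I`. -/
def fIfun (μ M : ℝ) (βI γI : ℝ → ℝ) (θ : ℝ) : ℝ :=
  M * ∫ s in Set.Ioi θ, βI s * Real.exp (-(∫ τ in θ..s, (γI τ + μ)))

/-- The Lyapunov weight `f_A`. -/
def fAfun (μ M : ℝ) (βA βI γA γI ξ χ : ℝ → ℝ) (θ : ℝ) : ℝ :=
  M * (∫ s in Set.Ioi θ,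
      βA s * Real.exp (-(∫ τ in θ..s, (γA τ * ξ τ + χ τ * (1 - ξ τ) + μ)))) +
    fIfun μ M βI γI 0 * ∫ s in Set.Ioi θ,
      χ s * (1 - ξ s) * Real.exp (-(∫ τ in θ..s, (γA τ * ξ τ + χ τ * (1 - ξ τ) + μ)))

/-- The Lyapunov weight `f_E`. -/
def fEfun (μ M : ℝ) (βA βI k q γA γI ξ χ : ℝ → ℝ) (θ : ℝ) : ℝ :=
  fAfun μ M βA βI γA γI ξ χ 0 *
      (∫ s in Set.Ioi θ, k s * q s * Real.exp (-(∫ τ in θ..s, (k τ + μ)))) +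
    fIfun μ M βI γI 0 *
      ∫ s in Set.Ioi θ, k s * (1 - q s) * Real.exp (-(∫ τ in θ..s, (k τ + μ)))

/-! Each of `f_I`, `f_A`, `f_E` is a linear combination, with constant coefficients, of weights
`∫_θ^∞ g(s) exp(−∫_θ^s w)` where `g` is bounded and the rate satisfies `w ≥ μ > 0`. Such a weight
converges because its integrand is at most `C·exp(−μ(s − θ))`, and it equals
`exp(W θ) · ∫_θ^∞ g(s) exp(−W s)` for a primitive `W` of `w`, so by the product rule and the
fundamental theorem of calculus its derivative is `w(θ)` times the weight minus `g(θ)`. -/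

def discountedTail (w g : ℝ → ℝ) (θ : ℝ) : ℝ :=
  ∫ s in Set.Ioi θ, g s * Real.exp (-(∫ τ in θ..s, w τ))

theorem hasDerivAt_integral_Ioi {h : ℝ → ℝ} {a : ℝ} (hc : Continuous h)
    (hi : IntegrableOn h (Set.Ioi a)) (θ : ℝ) :
    HasDerivAt (fun t => ∫ s in Set.Ioi t, h s) (-h θ) θ := by
  have hiT : ∀ t, IntegrableOn h (Set.Ioi t) := fun t =>
    (hc.integrableOn_Icc.union hi).mono_set fun s hs => by
      rcases le_or_gt s a with hsa | hsa
      exacts [Or.inl ⟨le_of_lt hs, hsa⟩, Or.inr hsa]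
  have hrep : (fun t => ∫ s in Set.Ioi t, h s) =
      fun t => (∫ s in Set.Ioi a, h s) - ∫ s in a..t, h s := by
    funext t
    rw [← intervalIntegral.integral_Ioi_sub_Ioi' hi (hiT t), sub_sub_cancel]
  rw [hrep]
  exact ((hc.integral_hasStrictDerivAt a θ).hasDerivAt).const_sub _

section DiscountedTail

variable {w g : ℝ → ℝ}

theorem discountedTail_eq_exp_mul (hw : Continuous w) (t : ℝ) :
    discountedTail w g t = Real.exp (∫ τ in (0:ℝ)..t, w τ) *
      ∫ s in Set.Ioi t, g s * Real.exp (-(∫ τ in (0:ℝ)..s, w τ)) := by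
  rw [discountedTail, ← integral_const_mul]
  congr 1 with s
  rw [← intervalIntegral.integral_interval_sub_left (hw.intervalIntegrable 0 s)
    (hw.intervalIntegrable 0 t), neg_sub, sub_eq_add_neg, Real.exp_add]
  ring

theorem hasDerivAt_discountedTail (hw : Continuous w) (hg : Continuous g)
    (hi : IntegrableOn (fun s => g s * Real.exp (-(∫ τ in (0:ℝ)..s, w τ))) (Set.Ioi 0))
    (θ : ℝ) :
    HasDerivAt (discountedTail w g) (w θ * discountedTail w g θ - g θ) θ := by
  have hW := (hw.integral_hasStrictDerivAt 0 θ).hasDerivAt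
  have hJ := hasDerivAt_integral_Ioi (h := fun s => g s * Real.exp (-(∫ τ in (0:ℝ)..s, w τ)))
    (hg.mul (intervalIntegral.continuous_primitive (hw.intervalIntegrable ·) 0).neg.rexp) hi θ
  rw [funext (discountedTail_eq_exp_mul hw)]
  refine (hW.exp.fun_mul hJ).congr_deriv ?_
  beta_reduce
  have hcancel : Real.exp (∫ τ in (0:ℝ)..θ, w τ) * Real.exp (-(∫ τ in (0:ℝ)..θ, w τ)) = 1 := by
    rw [← Real.exp_add, add_neg_cancel, Real.exp_zero]
  linear_combination -g θ * hcancel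

variable {μ C : ℝ}

theorem mul_sub_le_intervalIntegral (hw : Continuous w) (hwμ : ∀ s, 0 ≤ s → μ ≤ w s)
    {θ s : ℝ} (hθ : 0 ≤ θ) (hs : θ ≤ s) : μ * (s - θ) ≤ ∫ τ in θ..s, w τ := by
  have := intervalIntegral.integral_mono_on (μ := volume) hs intervalIntegrable_const
    (hw.intervalIntegrable θ s) fun τ hτ => hwμ τ (hθ.trans hτ.1)
  simpa [mul_comm] using this

theorem integrableOn_discountedTail_integrand (hμ : 0 < μ) (hw : Continuous w)
    (hwμ : ∀ s, 0 ≤ s → μ ≤ w s) (hg : Continuous g) (hgC : ∀ s, 0 ≤ s → |g s| ≤ C)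
    {θ : ℝ} (hθ : 0 ≤ θ) :
    IntegrableOn (fun s => g s * Real.exp (-(∫ τ in θ..s, w τ))) (Set.Ioi θ) := by
  have hcont : Continuous fun s => g s * Real.exp (-(∫ τ in θ..s, w τ)) :=
    hg.mul (intervalIntegral.continuous_primitive (hw.intervalIntegrable ·) θ).neg.rexp
  refine Integrable.mono' ((exp_neg_integrableOn_Ioi θ hμ).const_mul (C * Real.exp (μ * θ)))
    hcont.aestronglyMeasurable ?_
  filter_upwards [ae_restrict_mem measurableSet_Ioi] with s hs
  have hdecay : Real.exp (-(∫ τ in θ..s, w τ)) ≤ Real.exp (-(μ * (s - θ))) :=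
    Real.exp_le_exp.2 (neg_le_neg (mul_sub_le_intervalIntegral hw hwμ hθ hs.le))
  calc ‖g s * Real.exp (-(∫ τ in θ..s, w τ))‖
      = |g s| * Real.exp (-(∫ τ in θ..s, w τ)) := by
        rw [norm_mul, Real.norm_eq_abs, Real.norm_of_nonneg (Real.exp_pos _).le]
    _ ≤ C * Real.exp (-(μ * (s - θ))) :=
        mul_le_mul (hgC s (hθ.trans hs.le)) hdecay (Real.exp_pos _).le
          ((abs_nonneg _).trans (hgC θ hθ))
    _ = C * Real.exp (μ * θ) * Real.exp (-μ * s) := by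
        rw [mul_assoc, ← Real.exp_add]; ring_nf

end DiscountedTail

section Coefficients

variable {f g p : ℝ → ℝ}

theorem FracBC.one_sub (hp : FracBC p) : FracBC fun s => 1 - p s :=
  ⟨continuous_const.sub hp.1, fun s hs => by
    obtain ⟨h0, h1⟩ := hp.2 s hs
    constructor <;> linarith⟩

theorem CoeffBC.mul_fracBC (hf : CoeffBC f) (hp : FracBC p) : CoeffBC fun s => f s * p s := by
  obtain ⟨hfc, ⟨C, hC⟩, hf0⟩ := hf
  refine ⟨hfc.mul hp.1, ⟨C, fun s hs => ?_⟩, fun s hs => mul_nonneg (hf0 s hs) (hp.2 s hs).1⟩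
  calc f s * p s ≤ f s * 1 := mul_le_mul_of_nonneg_left (hp.2 s hs).2 (hf0 s hs)
    _ ≤ C := by rw [mul_one]; exact hC s hs

theorem CoeffBC.add (hf : CoeffBC f) (hg : CoeffBC g) : CoeffBC fun s => f s + g s := by
  obtain ⟨hfc, ⟨C, hC⟩, hf0⟩ := hf
  obtain ⟨hgc, ⟨D, hD⟩, hg0⟩ := hg
  exact ⟨hfc.add hgc, ⟨C + D, fun s hs => add_le_add (hC s hs) (hD s hs)⟩,
    fun s hs => add_nonneg (hf0 s hs) (hg0 s hs)⟩

variable {μ : ℝ}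

theorem CoeffBC.integrableOn_discountedTail_integrand (hμ : 0 < μ) (hg : CoeffBC g)
    (hf : CoeffBC f) {θ : ℝ} (hθ : 0 ≤ θ) :
    IntegrableOn (fun s => g s * Real.exp (-(∫ τ in θ..s, (f τ + μ)))) (Set.Ioi θ) := by
  obtain ⟨hgc, ⟨C, hC⟩, hg0⟩ := hg
  exact _root_.integrableOn_discountedTail_integrand hμ (hf.1.add continuous_const)
    (fun s hs => le_add_of_nonneg_left (hf.2.2 s hs)) hgc
    (fun s hs => (abs_of_nonneg (hg0 s hs)).trans_le (hC s hs)) hθ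

theorem CoeffBC.hasDerivAt_discountedTail (hμ : 0 < μ) (hg : CoeffBC g) (hf : CoeffBC f)
    (θ : ℝ) :
    HasDerivAt (discountedTail (fun τ => f τ + μ) g)
      ((f θ + μ) * discountedTail (fun τ => f τ + μ) g θ - g θ) θ :=
  _root_.hasDerivAt_discountedTail (hf.1.add continuous_const) hg.1
    (hg.integrableOn_discountedTail_integrand hμ hf le_rfl) θ

end Coefficients

theorem lyapunov_weights_wellDefined_and_derivatives_general
    (μ M : ℝ) (βA βI k χ γA γI q ξ : ℝ → ℝ)
    (hμ : 0 < μ)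
    (hβA : CoeffBC βA) (hβI : CoeffBC βI) (hk : CoeffBC k) (hχ : CoeffBC χ)
    (hγA : CoeffBC γA) (hγI : CoeffBC γI) (hq : FracBC q) (hξ : FracBC ξ) :
    -- the improper integrals defining f_I, f_A, f_E converge
    (∀ θ, 0 ≤ θ →
      IntegrableOn (fun s => βI s * Real.exp (-(∫ τ in θ..s, (γI τ + μ)))) (Set.Ioi θ) ∧
      IntegrableOn (fun s =>
        βA s * Real.exp (-(∫ τ in θ..s, (γA τ * ξ τ + χ τ * (1 - ξ τ) + μ)))) (Set.Ioi θ) ∧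
      IntegrableOn (fun s =>
        χ s * (1 - ξ s) * Real.exp (-(∫ τ in θ..s, (γA τ * ξ τ + χ τ * (1 - ξ τ) + μ))))
        (Set.Ioi θ) ∧
      IntegrableOn (fun s => k s * q s * Real.exp (-(∫ τ in θ..s, (k τ + μ)))) (Set.Ioi θ) ∧
      IntegrableOn (fun s => k s * (1 - q s) * Real.exp (-(∫ τ in θ..s, (k τ + μ))))
        (Set.Ioi θ)) ∧
    -- f_E is differentiable on ℝ≥0 and satisfies its ODE
    (∀ θ, 0 ≤ θ → HasDerivWithinAt (fEfun μ M βA βI k q γA γI ξ χ)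
      ((k θ + μ) * fEfun μ M βA βI k q γA γI ξ χ θ -
        fAfun μ M βA βI γA γI ξ χ 0 * (k θ * q θ) -
        fIfun μ M βI γI 0 * (k θ * (1 - q θ))) (Set.Ici 0) θ) ∧
    -- f_A is differentiable on ℝ≥0 and satisfies its ODE
    (∀ θ, 0 ≤ θ → HasDerivWithinAt (fAfun μ M βA βI γA γI ξ χ)
      ((γA θ * ξ θ + χ θ * (1 - ξ θ) + μ) * fAfun μ M βA βI γA γI ξ χ θ -
        fIfun μ M βI γI 0 * (χ θ * (1 - ξ θ)) - M * βA θ) (Set.Ici 0) θ) ∧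
    -- f_I is differentiable on ℝ≥0 and satisfies its ODE
    (∀ θ, 0 ≤ θ → HasDerivWithinAt (fIfun μ M βI γI)
      ((γI θ + μ) * fIfun μ M βI γI θ - M * βI θ) (Set.Ici 0) θ) := by
  have hχξ : CoeffBC fun s => χ s * (1 - ξ s) := hχ.mul_fracBC hξ.one_sub
  have hkq : CoeffBC fun s => k s * q s := hk.mul_fracBC hq
  have hkq' : CoeffBC fun s => k s * (1 - q s) := hk.mul_fracBC hq.one_sub
  have hrateA : CoeffBC fun s => γA s * ξ s + χ s * (1 - ξ s) := (hγA.mul_fracBC hξ).add hχξ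
  refine ⟨fun θ hθ => ⟨hβI.integrableOn_discountedTail_integrand hμ hγI hθ,
    hβA.integrableOn_discountedTail_integrand hμ hrateA hθ,
    hχξ.integrableOn_discountedTail_integrand hμ hrateA hθ,
    hkq.integrableOn_discountedTail_integrand hμ hk hθ,
    hkq'.integrableOn_discountedTail_integrand hμ hk hθ⟩, fun θ _ => ?_, fun θ _ => ?_,
    fun θ _ => ?_⟩
  · refine ((((hkq.hasDerivAt_discountedTail hμ hk θ).const_mul _).add
      ((hkq'.hasDerivAt_discountedTail hμ hk θ).const_mul _)).hasDerivWithinAt).congr_deriv ?_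
    simp only [fEfun, discountedTail]
    ring
  · refine ((((hβA.hasDerivAt_discountedTail hμ hrateA θ).const_mul M).add
      ((hχξ.hasDerivAt_discountedTail hμ hrateA θ).const_mul _)).hasDerivWithinAt).congr_deriv ?_
    simp only [fAfun, discountedTail]
    ring
  · refine (((hβI.hasDerivAt_discountedTail hμ hγI θ).const_mul M).hasDerivWithinAt).congr_deriv ?_
    simp only [fIfun, discountedTail]
    ring

/-- The Lyapunov weights `f_E, f_A, f_I` are well defined
(the improper integrals converge), differentiable on `ℝ≥0`, and satisfy the
stated linear ODEs. -/
theorem lyapunov_weights_wellDefined_and_derivatives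
    (μ M : ℝ) (βA βI k χ γA γI q ξ : ℝ → ℝ)
    (hμ : 0 < μ) (hM : 0 ≤ M)
    (hβA : CoeffBC βA) (hβI : CoeffBC βI) (hk : CoeffBC k) (hχ : CoeffBC χ)
    (hγA : CoeffBC γA) (hγI : CoeffBC γI) (hq : FracBC q) (hξ : FracBC ξ) :
    -- the improper integrals defining f_I, f_A, f_E converge
    (∀ θ, 0 ≤ θ →
      IntegrableOn (fun s => βI s * Real.exp (-(∫ τ in θ..s, (γI τ + μ)))) (Set.Ioi θ) ∧
      IntegrableOn (fun s =>
        βA s * Real.exp (-(∫ τ in θ..s, (γA τ * ξ τ + χ τ * (1 - ξ τ) + μ)))) (Set.Ioi θ) ∧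
      IntegrableOn (fun s =>
        χ s * (1 - ξ s) * Real.exp (-(∫ τ in θ..s, (γA τ * ξ τ + χ τ * (1 - ξ τ) + μ))))
        (Set.Ioi θ) ∧
      IntegrableOn (fun s => k s * q s * Real.exp (-(∫ τ in θ..s, (k τ + μ)))) (Set.Ioi θ) ∧
      IntegrableOn (fun s => k s * (1 - q s) * Real.exp (-(∫ τ in θ..s, (k τ + μ))))
        (Set.Ioi θ)) ∧
    -- f_E is differentiable on ℝ≥0 and satisfies its ODE
    (∀ θ, 0 ≤ θ → HasDerivWithinAt (fEfun μ M βA βI k q γA γI ξ χ)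
      ((k θ + μ) * fEfun μ M βA βI k q γA γI ξ χ θ -
        fAfun μ M βA βI γA γI ξ χ 0 * (k θ * q θ) -
        fIfun μ M βI γI 0 * (k θ * (1 - q θ))) (Set.Ici 0) θ) ∧
    -- f_A is differentiable on ℝ≥0 and satisfies its ODE
    (∀ θ, 0 ≤ θ → HasDerivWithinAt (fAfun μ M βA βI γA γI ξ χ)
      ((γA θ * ξ θ + χ θ * (1 - ξ θ) + μ) * fAfun μ M βA βI γA γI ξ χ θ -
        fIfun μ M βI γI 0 * (χ θ * (1 - ξ θ)) - M * βA θ) (Set.Ici 0) θ) ∧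
    -- f_I is differentiable on ℝ≥0 and satisfies its ODE
    (∀ θ, 0 ≤ θ → HasDerivWithinAt (fIfun μ M βI γI)
      ((γI θ + μ) * fIfun μ M βI γI θ - M * βI θ) (Set.Ici 0) θ) :=
  lyapunov_weights_wellDefined_and_derivatives_general μ M βA βI k χ γA γI q ξ hμ hβA hβI hk hχ hγA
    hγI hq hξ
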